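/- arXiv:1606.08976 — 5 statements merged into one kernel-verified Lean document; each statement's English description precedes it below -/
import Mathlib

section
/- Let B be a 1-symmetric convex body in ℝⁿ (n ≥ 2) and x = (x₁,…,xₙ) ∈ ∂B. If |xᵢ| > |xⱼ| for some indices i, j ≤ n, then |vᵢ| ≥ |vⱼ| for every v = (v₁,…,vₙ) in the Gauss image G(B,x). -/
/-!
Reflect `x` in the hyperplane `xᵢ = xⱼ` and choose coordinate signs so that every term of
`⟨v, y⟩` becomes `|vₖ| |yₖ|`. The resulting point `y` lies in `B`, so the normal `v` gives
`⟨v, y⟩ ≤ ⟨v, x⟩`, which after cancelling the common coordinates reads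
`(|vᵢ| - |vⱼ|) (|xⱼ| - |xᵢ|) ≤ 0`.
-/

open scoped BigOperators

/-- A 1-symmetric convex body: a compact convex set with nonempty interior that is
invariant under coordinate sign changes and coordinate permutations. -/
def IsSymBody (n : ℕ) (B : Set (Fin n → ℝ)) : Prop :=
  IsCompact B ∧ Convex ℝ B ∧ (interior B).Nonempty ∧
    ∀ x ∈ B, ∀ ε : Fin n → ℝ, (∀ i, ε i = 1 ∨ ε i = -1) →
      ∀ σ : Equiv.Perm (Fin n), (fun i => ε i * x (σ i)) ∈ B

/-- The Gauss image of `B` at `x`: the set of unit outer normal vectors at `x`. -/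
def gaussImage {n : ℕ} (B : Set (Fin n → ℝ)) (x : Fin n → ℝ) : Set (Fin n → ℝ) :=
  {v | (∑ i, (v i) ^ 2 = 1) ∧ ∀ y ∈ B, (∑ i, v i * (y i - x i)) ≤ 0}

/-- The boundary point `x` of `B` is illuminated in direction `y`. -/
def Illuminates {n : ℕ} (y x : Fin n → ℝ) (B : Set (Fin n → ℝ)) : Prop :=
  ∃ ε : ℝ, 0 < ε ∧ x + ε • y ∈ interior B

open Finset

section Rearrangement

variable {ι : Type*} [Fintype ι]

theorem exists_signs_sum_mul_eq_sum_abs_mul (v w : ι → ℝ) :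
    ∃ ε : ι → ℝ, (∀ k, ε k = 1 ∨ ε k = -1) ∧
      ∑ k, v k * (ε k * w k) = ∑ k, |v k| * |w k| := by
  refine ⟨fun k => if 0 ≤ v k * w k then 1 else -1, fun k => by dsimp only; split_ifs <;> simp, ?_⟩
  refine sum_congr rfl fun k _ => ?_
  dsimp only
  rw [← abs_mul]
  split_ifs with h
  · rw [abs_of_nonneg h]; ring
  · rw [abs_of_neg (not_le.mp h)]; ring

theorem sum_mul_comp_swap_sub_sum_mul [DecidableEq ι] (a b : ι → ℝ) (i j : ι) :
    ∑ k, a k * b (Equiv.swap i j k) - ∑ k, a k * b k = (a i - a j) * (b j - b i) := by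
  rcases eq_or_ne i j with rfl | hij
  · simp
  rw [← sum_sub_distrib, Fintype.sum_eq_add i j hij fun k hk => by
    rw [Equiv.swap_apply_of_ne_of_ne hk.1 hk.2, sub_self]]
  simp only [Equiv.swap_apply_left, Equiv.swap_apply_right]
  ring

end Rearrangement

theorem sum_abs_mul_comp_perm_le {n : ℕ} {B : Set (Fin n → ℝ)}
    (hB : ∀ x ∈ B, ∀ ε : Fin n → ℝ, (∀ i, ε i = 1 ∨ ε i = -1) →
      ∀ σ : Equiv.Perm (Fin n), (fun i => ε i * x (σ i)) ∈ B)
    {x v : Fin n → ℝ} (hx : x ∈ B) (hv : ∀ y ∈ B, ∑ i, v i * (y i - x i) ≤ 0)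
    (σ : Equiv.Perm (Fin n)) :
    ∑ k, |v k| * |x (σ k)| ≤ ∑ k, |v k| * |x k| := by
  obtain ⟨ε, hε, hsum⟩ := exists_signs_sum_mul_eq_sum_abs_mul v (x ∘ σ)
  have hnormal := hv _ (hB x hx ε hε σ)
  simp only [mul_sub, sum_sub_distrib, sub_nonpos] at hnormal
  calc ∑ k, |v k| * |x (σ k)| = ∑ k, v k * (ε k * x (σ k)) := hsum.symm
    _ ≤ ∑ k, v k * x k := hnormal
    _ ≤ ∑ k, |v k| * |x k| := sum_le_sum fun k _ => by rw [← abs_mul]; exact le_abs_self _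

theorem statement_3_general (n : ℕ) (B : Set (Fin n → ℝ)) (hB : IsSymBody n B)
    (x : Fin n → ℝ) (hx : x ∈ frontier B) (i j : Fin n) (hij : |x j| < |x i|) :
    ∀ v ∈ gaussImage B x, |v j| ≤ |v i| := by
  intro v hv
  have hxB : x ∈ B := hB.1.isClosed.frontier_subset hx
  have hswap := sum_abs_mul_comp_perm_le hB.2.2.2 hxB hv.2 (Equiv.swap i j)
  rw [← sub_nonpos, sum_mul_comp_swap_sub_sum_mul (fun k => |v k|) (fun k => |x k|)] at hswap
  exact sub_nonneg.mp (nonneg_of_mul_nonpos_left hswap (sub_neg.mpr hij))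

theorem statement_3 (n : ℕ) (hn : 2 ≤ n) (B : Set (Fin n → ℝ)) (hB : IsSymBody n B)
    (x : Fin n → ℝ) (hx : x ∈ frontier B) (i j : Fin n) (hij : |x j| < |x i|) :
    ∀ v ∈ gaussImage B x, |v j| ≤ |v i| :=
  statement_3_general n B hB x hx i j hij
end

section
/- Let B be a 1-symmetric convex body in ℝⁿ (n ≥ 2) with 0 in its interior, let x ∈ ∂B, and let y ∈ {−1,0,1}ⁿ satisfy: (1) every coordinate where y vanishes is a coordinate where x vanishes, and (2) yᵢ = −sign(xᵢ) whenever xᵢ ≠ 0. If x is not illuminated in direction y, then ‖∑_{i : yᵢ ≠ 0} eᵢ‖_B ≥ 2/‖x‖_∞, where ‖·‖_B is the Minkowski functional of B. -/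
open scoped BigOperators

/-!
Since `B` is convex and invariant under coordinate sign changes, its gauge is monotone in the
absolute values of the coordinates. With `t = ‖x‖ / 4`, the sign condition on `y` gives
`|x i + t * y i| = ||x i| - t| ≤ |x i| / 2 + t * |y i|` for every `i`, hence
`gauge (x + t • y) ≤ gauge x / 2 + t * gauge |y| ≤ 1 / 2 + (‖x‖ / 4) * gauge |y|`,
where `|y| = ∑_{y i ≠ 0} e i`. If `gauge |y| < 2 / ‖x‖` this is `< 1`, so `x + t • y` is an
interior point and `x` is illuminated in direction `y`.
-/

theorem abs_add_mul_le_of_eq_neg_sign {a b t : ℝ} (ht : |a| ≤ 4 * t)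
    (hb : a ≠ 0 → b = -Real.sign a) : |a + t * b| ≤ |a| / 2 + t * |b| := by
  rcases lt_trichotomy a 0 with ha | rfl | ha
  · rw [hb ha.ne, Real.sign_of_neg ha, abs_of_neg ha] at *
    rw [abs_le]; constructor <;> norm_num <;> linarith
  · simp [abs_mul, abs_of_nonneg (show 0 ≤ t by simpa using ht)]
  · rw [hb ha.ne', Real.sign_of_pos ha, abs_of_pos ha] at *
    rw [abs_le]; constructor <;> norm_num <;> linarith

def IsUnconditional {ι : Type*} (B : Set (ι → ℝ)) : Prop :=
  ∀ v ∈ B, ∀ ε : ι → ℝ, (∀ i, ε i = 1 ∨ ε i = -1) → (fun i => ε i * v i) ∈ B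

theorem IsSymBody.isUnconditional {n : ℕ} {B : Set (Fin n → ℝ)} (hB : IsSymBody n B) :
    IsUnconditional B := fun v hv ε hε => by
  simpa using hB.2.2.2 v hv ε hε 1

namespace IsUnconditional

variable {ι : Type*} {B : Set (ι → ℝ)}

theorem update_mem [DecidableEq ι] (hB : IsUnconditional B) (hconv : Convex ℝ B) {v : ι → ℝ}
    (hv : v ∈ B) (j : ι) {a : ℝ} (ha : |a| ≤ |v j|) : Function.update v j a ∈ B := by
  rcases eq_or_ne (v j) 0 with hvj | hvj
  · have : a = 0 := abs_nonpos_iff.1 (by simpa [hvj] using ha)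
    simpa [this, ← hvj] using hv
  -- `update v j a` lies on the segment from `v` to its reflection in the `j`-th coordinate
  have hreflect : (fun i => Function.update (1 : ι → ℝ) j (-1) i * v i) ∈ B :=
    hB v hv _ fun i => by rcases eq_or_ne i j with rfl | h <;> simp [*]
  have hs := abs_le.1 ((abs_div a (v j)).trans_le ((div_le_one (abs_pos.2 hvj)).2 ha))
  convert hconv hv hreflect (a := (1 + a / v j) / 2) (b := (1 - a / v j) / 2)
    (by linarith) (by linarith) (by ring) using 1
  ext i
  rcases eq_or_ne i j with rfl | h
  · simp only [Function.update_self, Pi.add_apply, Pi.smul_apply, smul_eq_mul]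
    field_simp
    ring
  · simp only [Function.update_of_ne h, Pi.add_apply, Pi.smul_apply, smul_eq_mul,
      Pi.one_apply]
    ring

variable [Fintype ι]

theorem mem_of_abs_le (hB : IsUnconditional B) (hconv : Convex ℝ B) {u v : ι → ℝ}
    (h : ∀ i, |u i| ≤ |v i|) (hv : v ∈ B) : u ∈ B := by
  classical
  suffices ∀ T : Finset ι, (fun i => if i ∈ T then u i else v i) ∈ B by
    simpa using this Finset.univ
  intro T
  induction T using Finset.induction_on with
  | empty => simpa using hv
  | @insert j T hj ih =>
    convert hB.update_mem hconv ih j (a := u j) (by simpa [hj] using h j) using 1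
    ext i
    rcases eq_or_ne i j with rfl | h <;> simp [*]

theorem gauge_le_of_abs_le (hB : IsUnconditional B) (hconv : Convex ℝ B)
    (habs : Absorbent ℝ B) {u v : ι → ℝ} (h : ∀ i, |u i| ≤ |v i|) :
    gauge B u ≤ gauge B v := by
  refine le_of_forall_gt fun a ha => ?_
  obtain ⟨b, hb, hba, hvb⟩ := exists_lt_of_gauge_lt habs ha
  refine (gauge_le_of_mem hb.le ?_).trans_lt hba
  rw [Set.mem_smul_set_iff_inv_smul_mem₀ hb.ne'] at hvb ⊢
  refine hB.mem_of_abs_le hconv (fun i => ?_) hvb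
  simpa [abs_mul] using mul_le_mul_of_nonneg_left (h i) (abs_nonneg b⁻¹)

theorem gauge_add_smul_le (hB : IsUnconditional B) (hconv : Convex ℝ B)
    (habs : Absorbent ℝ B) {x y : ι → ℝ} (hy : ∀ i, x i ≠ 0 → y i = -Real.sign (x i)) {t : ℝ}
    (ht : ‖x‖ ≤ 4 * t) :
    gauge B (x + t • y) ≤ gauge B x / 2 + t * gauge B (fun i => |y i|) := by
  have ht0 : 0 ≤ t := by linarith [norm_nonneg x]
  have hxi : ∀ i, |x i| ≤ 4 * t := fun i =>
    ((Real.norm_eq_abs (x i)).symm.trans_le (norm_le_pi_norm x i)).trans ht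
  calc gauge B (x + t • y)
      ≤ gauge B ((1 / 2 : ℝ) • (fun i => |x i|) + t • fun i => |y i|) := by
        refine hB.gauge_le_of_abs_le hconv habs fun i => ?_
        simp only [Pi.add_apply, Pi.smul_apply, smul_eq_mul]
        exact le_abs.2 <| .inl <|
          (abs_add_mul_le_of_eq_neg_sign (hxi i) (hy i)).trans_eq (by ring)
    _ ≤ gauge B (fun i => |x i|) / 2 + t * gauge B (fun i => |y i|) := by
        refine (gauge_add_le hconv habs _ _).trans_eq ?_
        rw [gauge_smul_of_nonneg (by norm_num), gauge_smul_of_nonneg ht0, smul_eq_mul,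
          smul_eq_mul]
        ring
    _ ≤ gauge B x / 2 + t * gauge B (fun i => |y i|) := by
        gcongr
        exact hB.gauge_le_of_abs_le hconv habs fun i => by simp

end IsUnconditional

theorem statement_4_general (n : ℕ) (B : Set (Fin n → ℝ)) (hB : IsSymBody n B)
    (h0 : (0 : Fin n → ℝ) ∈ interior B) (x : Fin n → ℝ) (hx : x ∈ frontier B)
    (y : Fin n → ℝ) (hy : ∀ i, y i = -1 ∨ y i = 0 ∨ y i = 1)
    (hysign : ∀ i, x i ≠ 0 → y i = -Real.sign (x i))
    (hnotill : ¬ Illuminates y x B) :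
    2 / ‖x‖ ≤ gauge B (∑ i ∈ Finset.univ.filter (fun i => y i ≠ 0), Pi.single i (1 : ℝ)) := by
  have hunc := hB.isUnconditional
  obtain ⟨hcomp, hconv, -, -⟩ := hB
  have hB0 : B ∈ nhds 0 := mem_interior_iff_mem_nhds.1 h0
  have habs : Absorbent ℝ B := absorbent_nhds_zero hB0
  have hx1 : gauge B x ≤ 1 := gauge_le_one_of_mem (hcomp.isClosed.frontier_subset hx)
  have hx0 : 0 < ‖x‖ := norm_pos_iff.2 fun h => hx.2 (h ▸ h0)
  have hw : ∑ i ∈ Finset.univ.filter (fun i => y i ≠ 0), Pi.single i (1 : ℝ) =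
      fun i => |y i| := funext fun i => by
    rcases hy i with h | h | h <;> simp [Finset.sum_apply, Finset.sum_pi_single, h]
  rw [hw]
  by_contra! hlt
  refine hnotill ⟨‖x‖ / 4, by positivity, (gauge_lt_one_iff_mem_interior hconv hB0).1 ?_⟩
  calc gauge B (x + (‖x‖ / 4) • y)
      ≤ gauge B x / 2 + ‖x‖ / 4 * gauge B (fun i => |y i|) :=
        hunc.gauge_add_smul_le hconv habs hysign (by linarith)
    _ < 1 / 2 + ‖x‖ / 4 * (2 / ‖x‖) := add_lt_add_of_le_of_lt (by linarith) (by gcongr)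
    _ = 1 := by field_simp; ring

theorem statement_4 (n : ℕ) (hn : 2 ≤ n) (B : Set (Fin n → ℝ)) (hB : IsSymBody n B)
    (h0 : (0 : Fin n → ℝ) ∈ interior B) (x : Fin n → ℝ) (hx : x ∈ frontier B)
    (y : Fin n → ℝ) (hy : ∀ i, y i = -1 ∨ y i = 0 ∨ y i = 1)
    (hy0 : ∀ i, y i = 0 → x i = 0)
    (hysign : ∀ i, x i ≠ 0 → y i = -Real.sign (x i))
    (hnotill : ¬ Illuminates y x B) :
    2 / ‖x‖ ≤ gauge B (∑ i ∈ Finset.univ.filter (fun i => y i ≠ 0), Pi.single i (1 : ℝ)) :=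
  statement_4_general n B hB h0 x hx y hy hysign hnotill
end

section
/- Let B be a 1-symmetric convex body in ℝⁿ (n ≥ 2) with ‖eᵢ‖_B = 1, and suppose ‖∑_{i=1}^n eᵢ‖_B < 2 and B ≠ [−1,1]ⁿ. Then at least one of the following holds: (1) B is illuminated by the 2ⁿ − 1 directions consisting of all sign vectors (ε₁,…,εₙ) ∈ {−1,1}ⁿ having εᵢ = −1 for some i ≤ n−1, together with e₁ + e₂ + ⋯ + e_{n−1}; or (2) ‖eᵢ + eⱼ‖_B > ‖eᵢ‖_B for all i ≠ j. -/
open scoped BigOperators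

/-!
If alternative (2) fails, `e_i + e_j ∈ B` for some `i ≠ j`, hence for all `i ≠ j` by symmetry.
A 1-symmetric convex body is solid, so `z ∈ int B` as soon as `|z|` is coordinatewise strictly
below some point of `B`, and each illumination amounts to exhibiting such a point as a convex
combination of `|x|`, a permutation of `|x|`, and one of `t • 𝟙` (`t > 1/2`, from `‖𝟙‖ < 2`),
`e_n`, `e_j + e_n`, where `𝟙 = e_1 + ⋯ + e_n`. For `x ∈ ∂B` (so `|x| ≤ 𝟙`):
* if `x_i ≥ 0` for some `i < n`, the sign vector pointing against `x` illuminates `x`;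
* if `x_i < 0` for all `i < n` and `|x_n| < 1`, the direction `e_1 + ⋯ + e_{n-1}` does;
* if moreover `|x_n| = 1` and `|x_j| < 1` for some `j < n`, the sign vector pointing against `x`
  except in coordinate `j` does, using `e_j + e_n ∈ B`;
* otherwise `|x| = 𝟙`, and `B` is the cube.
-/

open Filter Topology

theorem Convex.smul_add_smul_add_smul_mem {E : Type*} [AddCommGroup E] [Module ℝ E]
    {s : Set E} (hs : Convex ℝ s) {x y z : E} (hx : x ∈ s) (hy : y ∈ s) (hz : z ∈ s)
    {a b c : ℝ} (ha : 0 ≤ a) (hb : 0 ≤ b) (hc : 0 ≤ c) (habc : a + b + c = 1) :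
    a • x + b • y + c • z ∈ s := by
  simpa [Fin.sum_univ_three, add_assoc] using
    hs.sum_mem (t := Finset.univ) (w := ![a, b, c]) (z := ![x, y, z])
      (by simp [Fin.forall_fin_succ, *]) (by simpa [Fin.sum_univ_three, add_assoc] using habc)
      (by simp [Fin.forall_fin_succ, *])

theorem abs_add_mul_of_mul_nonpos {a y ε : ℝ} (hy : y = 1 ∨ y = -1) (hay : a * y ≤ 0)
    (hε : ε ≤ |a|) : |a + ε * y| = |a| - ε := by
  rcases hy with rfl | rfl
  · rw [mul_one] at hay
    rw [abs_of_nonpos hay] at hε ⊢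
    rw [abs_of_nonpos (by linarith)]
    ring
  · rw [mul_neg_one, neg_nonpos] at hay
    rw [abs_of_nonneg hay] at hε ⊢
    rw [abs_of_nonneg (by linarith)]
    ring

noncomputable def antisign {ι : Type*} (x : ι → ℝ) : ι → ℝ := fun i => if x i < 0 then 1 else -1

theorem antisign_eq_one_or_eq_neg_one {ι : Type*} (x : ι → ℝ) (i : ι) :
    antisign x i = 1 ∨ antisign x i = -1 := by
  by_cases h : x i < 0 <;> simp [antisign, h]

theorem mul_antisign_nonpos {ι : Type*} (x : ι → ℝ) (i : ι) : x i * antisign x i ≤ 0 := by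
  by_cases h : x i < 0
  · simp [antisign, h, h.le]
  · simpa [antisign, h] using not_lt.1 h

theorem mul_antisign_neg {ι : Type*} {x : ι → ℝ} {i : ι} (h : x i ≠ 0) :
    x i * antisign x i < 0 := by
  rcases h.lt_or_gt with h | h <;> simp [antisign, h, h.not_gt]

def illuminationDirections (n : ℕ) : Set (Fin n → ℝ) :=
  {y | ((∀ i, y i = 1 ∨ y i = -1) ∧ ∃ i : Fin n, (i : ℕ) < n - 1 ∧ y i = -1) ∨
    y = ∑ i ∈ Finset.univ.filter (fun i : Fin n => (i : ℕ) < n - 1), Pi.single i (1 : ℝ)}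

namespace IsSymBody

variable {n : ℕ} {B : Set (Fin n → ℝ)}

protected theorem convex (hB : IsSymBody n B) : Convex ℝ B := hB.2.1

protected theorem isClosed (hB : IsSymBody n B) : IsClosed B := hB.1.isClosed

theorem comp_perm_mem (hB : IsSymBody n B) {x : Fin n → ℝ} (hx : x ∈ B)
    (σ : Equiv.Perm (Fin n)) : x ∘ σ ∈ B := by
  simpa [Function.comp_def] using hB.2.2.2 x hx 1 (fun _ => Or.inl rfl) σ

theorem update_neg_mem (hB : IsSymBody n B) {x : Fin n → ℝ} (hx : x ∈ B) (i : Fin n) :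
    Function.update x i (-x i) ∈ B := by
  convert hB.2.2.2 x hx (Function.update 1 i (-1))
    (fun k => by rcases eq_or_ne k i with rfl | hk <;> simp [*]) 1 using 1
  ext k
  rcases eq_or_ne k i with rfl | hk <;> simp [*]

theorem update_mem_of_abs_le (hB : IsSymBody n B) {x : Fin n → ℝ} (hx : x ∈ B) (i : Fin n)
    {c : ℝ} (hc : |c| ≤ |x i|) : Function.update x i c ∈ B := by
  have hseg : c ∈ segment ℝ (x i) (-x i) := by
    rw [segment_eq_uIcc, Set.mem_uIcc]
    rcases abs_le.1 hc with ⟨h₁, h₂⟩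
    cases abs_cases (x i) <;> [right; left] <;> constructor <;> linarith
  obtain ⟨a, b, ha, hb, hab, rfl⟩ := hseg
  convert hB.convex hx (hB.update_neg_mem hx i) ha hb hab using 1
  ext k
  rcases eq_or_ne k i with rfl | hk
  · simp
  · simp [hk, ← add_mul, hab]

theorem mem_of_abs_le (hB : IsSymBody n B) {x y : Fin n → ℝ} (hx : x ∈ B)
    (h : ∀ i, |y i| ≤ |x i|) : y ∈ B := by
  suffices ∀ s : Finset (Fin n), (fun i => if i ∈ s then y i else x i) ∈ B by
    simpa using this Finset.univ
  intro s
  induction s using Finset.induction_on with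
  | empty => simpa using hx
  | insert a s ha ih =>
    convert hB.update_mem_of_abs_le ih a (c := y a) (by simpa [ha] using h a) using 1
    ext k
    rcases eq_or_ne k a with rfl | hk <;> simp [*]

theorem abs_mem (hB : IsSymBody n B) {x : Fin n → ℝ} (hx : x ∈ B) : (fun i => |x i|) ∈ B :=
  hB.mem_of_abs_le hx fun i => (abs_abs (x i)).le

theorem mem_interior_of_abs_lt (hB : IsSymBody n B) {w z : Fin n → ℝ} (hw : w ∈ B)
    (h : ∀ i, |z i| < w i) : z ∈ interior B := by
  have hbox : Set.univ.pi (fun i => Set.Ioo (-w i) (w i)) ⊆ B := fun v hv =>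
    hB.mem_of_abs_le hw fun i => (abs_lt.2 (hv i trivial)).le.trans (le_abs_self _)
  refine interior_mono hbox ?_
  rw [(isOpen_set_pi Set.finite_univ fun _ _ => isOpen_Ioo).interior_eq]
  exact fun i _ => abs_lt.1 (h i)

theorem zero_mem_interior (hB : IsSymBody n B) : (0 : Fin n → ℝ) ∈ interior B := by
  obtain ⟨z, hz⟩ := hB.2.2.1
  have hneg : -z ∈ B := by
    convert hB.2.2.2 z (interior_subset hz) (-1) (fun _ => Or.inr rfl) 1 using 1
    ext; simp
  simpa using hB.convex.combo_interior_self_mem_interior hz hneg (a := 1 / 2) (b := 1 / 2)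
    (by norm_num) (by norm_num) (by norm_num)

theorem mem_iff_gauge_le_one (hB : IsSymBody n B) {x : Fin n → ℝ} : x ∈ B ↔ gauge B x ≤ 1 := by
  rw [gauge_le_one_iff_mem_closure hB.convex (mem_interior_iff_mem_nhds.1 hB.zero_mem_interior),
    hB.isClosed.closure_eq]


theorem abs_le_one (hB : IsSymBody n B) (hnorm : ∀ i, gauge B (Pi.single i (1 : ℝ)) = 1)
    {x : Fin n → ℝ} (hx : x ∈ B) (i : Fin n) : |x i| ≤ 1 := by
  have hsingle : |x i| • Pi.single i (1 : ℝ) ∈ B := hB.mem_of_abs_le hx fun k => by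
    rcases eq_or_ne k i with rfl | hk <;> simp [*]
  rw [hB.mem_iff_gauge_le_one, gauge_smul_of_nonneg (abs_nonneg (x i)), hnorm, smul_eq_mul,
    mul_one] at hsingle
  exact hsingle

theorem exists_half_lt_const_mem (hB : IsSymBody n B)
    (hdist : gauge B (∑ i, Pi.single i (1 : ℝ)) < 2) : ∃ t : ℝ, 1 / 2 < t ∧ (fun _ => t) ∈ B := by
  set c := gauge B (∑ i, Pi.single i (1 : ℝ))
  have hc : 0 ≤ c := gauge_nonneg _
  refine ⟨2 / (c + 2), by rw [lt_div_iff₀ (by linarith)]; linarith, ?_⟩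
  have hconst : (fun _ : Fin n => 2 / (c + 2)) = (2 / (c + 2)) • ∑ i, Pi.single i (1 : ℝ) := by
    ext; simp [Finset.sum_apply, Pi.single_apply]
  rw [hconst, hB.mem_iff_gauge_le_one, gauge_smul_of_nonneg (by positivity), smul_eq_mul,
    div_mul_eq_mul_div, div_le_one (by linarith)]
  linarith

theorem single_add_single_mem (hB : IsSymBody n B) {i j a b : Fin n} (hij : i ≠ j)
    (h : Pi.single i (1 : ℝ) + Pi.single j 1 ∈ B) (hab : a ≠ b) :
    Pi.single a (1 : ℝ) + Pi.single b 1 ∈ B := by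
  obtain ⟨σ, rfl, rfl⟩ :=
    MulAction.is_two_pretransitive_iff.1 (Equiv.Perm.isMultiplyPretransitive (Fin n) 2) hab hij
  convert hB.comp_perm_mem h σ using 1
  ext k
  simp [Pi.single_apply, Equiv.Perm.smul_def]

theorem eq_Icc_of_abs_eq_one (hB : IsSymBody n B)
    (hnorm : ∀ i, gauge B (Pi.single i (1 : ℝ)) = 1) {x : Fin n → ℝ} (hx : x ∈ B)
    (h1 : ∀ i, |x i| = 1) : B = Set.Icc (fun _ => -1) (fun _ => 1) := by
  ext v
  simp only [Set.mem_Icc, Pi.le_def, ← forall_and, ← abs_le]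
  exact ⟨fun hv i => hB.abs_le_one hnorm hv i,
    fun hv => hB.mem_of_abs_le hx fun i => (hv i).trans (h1 i).ge⟩

theorem illuminates_of_eventually (hB : IsSymBody n B) {x y : Fin n → ℝ} (w : ℝ → Fin n → ℝ)
    (hw : ∀ᶠ ε in 𝓝[>] 0, w ε ∈ B) (hlt : ∀ i, ∀ᶠ ε in 𝓝[>] 0, |x i + ε * y i| < w ε i) :
    Illuminates y x B := by
  obtain ⟨ε, hε, hwε, hltε⟩ :=
    (eventually_mem_nhdsWithin.and (hw.and (eventually_all.2 hlt))).exists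
  exact ⟨ε, hε, hB.mem_interior_of_abs_lt hwε (by simpa using hltε)⟩

theorem illuminates_of_mul_nonpos (hB : IsSymBody n B) {t : ℝ} (ht : 1 / 2 < t)
    (htB : (fun _ => t) ∈ B) {x y : Fin n → ℝ} (hx : x ∈ B) (hx1 : ∀ i, |x i| ≤ 1)
    (hy : ∀ i, y i = 1 ∨ y i = -1) (hxy : ∀ i, x i * y i ≤ 0) : Illuminates y x B := by
  refine hB.illuminates_of_eventually
    (fun ε => (1 - 2 * ε) • (fun i => |x i|) + (2 * ε) • fun _ => t) ?_ fun i => ?_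
  · filter_upwards [Ioo_mem_nhdsGT (show (0 : ℝ) < 1 / 2 by norm_num)] with ε ⟨h0, h1⟩
    exact hB.convex (hB.abs_mem hx) htB (by linarith) (by linarith) (by ring)
  · rcases eq_or_ne (x i) 0 with h | h
    · filter_upwards [eventually_mem_nhdsWithin] with ε (hε : 0 < ε)
      simp [h, abs_mul, (abs_eq zero_le_one).2 (hy i), abs_of_pos hε]
      nlinarith
    · filter_upwards [Ioo_mem_nhdsGT (abs_pos.2 h)] with ε ⟨h0, h1⟩
      rw [abs_add_mul_of_mul_nonpos (hy i) (hxy i) h1.le]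
      simp
      nlinarith [hx1 i]

theorem illuminates_of_abs_lt_one (hB : IsSymBody n B) {k : Fin n}
    (hk : Pi.single k (1 : ℝ) ∈ B) {x y : Fin n → ℝ} (hx : x ∈ B) (hx1 : ∀ i, |x i| ≤ 1)
    (hxk : |x k| < 1) (hyk : y k = 0) (hy : ∀ i ≠ k, y i = 1 ∨ y i = -1)
    (hxy : ∀ i ≠ k, x i * y i < 0) : Illuminates y x B := by
  refine hB.illuminates_of_eventually
    (fun ε => (1 - ε / 2) • (fun i => |x i|) + (ε / 2) • Pi.single k 1) ?_ fun i => ?_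
  · filter_upwards [Ioo_mem_nhdsGT one_pos] with ε ⟨h0, h1⟩
    exact hB.convex (hB.abs_mem hx) hk (by linarith) (by linarith) (by ring)
  · rcases eq_or_ne i k with rfl | hik
    · filter_upwards [eventually_mem_nhdsWithin] with ε (hε : 0 < ε)
      simp [hyk]
      nlinarith
    · have hxi : x i ≠ 0 := left_ne_zero_of_mul (hxy i hik).ne
      filter_upwards [Ioo_mem_nhdsGT (abs_pos.2 hxi)] with ε ⟨h0, h1⟩
      rw [abs_add_mul_of_mul_nonpos (hy i hik) (hxy i hik).le h1.le]
      simp [hik]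
      nlinarith [hx1 i]

theorem illuminates_of_abs_eq_one (hB : IsSymBody n B) {j k : Fin n} (hjk : j ≠ k)
    (hu : Pi.single j (1 : ℝ) + Pi.single k 1 ∈ B) {x y : Fin n → ℝ} (hx : x ∈ B)
    (hx1 : ∀ i, |x i| ≤ 1) (hxk : |x k| = 1) (hxj : |x j| < 1)
    (hy : ∀ i, y i = 1 ∨ y i = -1) (hxy : ∀ i ≠ j, x i * y i < 0) : Illuminates y x B := by
  set m := |x j|
  have hm0 : 0 ≤ m := abs_nonneg _
  have hm1 : 0 < 1 - m := by linarith
  -- Coordinates `j` and `k` become strict exactly when `(1 + m) / 2 < c * (1 - m) < 1`.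
  set c := (3 + m) / (4 * (1 - m))
  have hc : c * (1 - m) = (3 + m) / 4 := by
    simp only [c]
    field_simp
  have hc0 : 0 ≤ c := div_nonneg (by linarith) (by linarith)
  refine hB.illuminates_of_eventually
    (fun ε => (c * ε) • ((fun i => |x i|) ∘ Equiv.swap j k) +
      (1 - c * ε - ε / 2) • (fun i => |x i|) + (ε / 2) • (Pi.single j 1 + Pi.single k 1))
    ?_ fun i => ?_
  · filter_upwards [Ioo_mem_nhdsGT (show 0 < 1 / (c + 1) by positivity)] with ε ⟨h0, h1⟩
    rw [lt_div_iff₀ (by positivity)] at h1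
    exact hB.convex.smul_add_smul_add_smul_mem (hB.comp_perm_mem (hB.abs_mem hx) _)
      (hB.abs_mem hx) hu (by positivity) (by nlinarith) (by linarith) (by ring)
  · rcases eq_or_ne i j with rfl | hij
    · filter_upwards [eventually_mem_nhdsWithin] with ε (hε : 0 < ε)
      have hle : |x i + ε * y i| ≤ m + ε := by
        simpa [abs_mul, (abs_eq zero_le_one).2 (hy i), abs_of_pos hε] using
          abs_add_le (x i) (ε * y i)
      simp [hjk, hxk]
      nlinarith
    rcases eq_or_ne i k with rfl | hik
    · filter_upwards [Ioo_mem_nhdsGT one_pos] with ε ⟨h0, h1⟩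
      rw [abs_add_mul_of_mul_nonpos (hy i) (hxy i hij).le (by linarith)]
      simp [hij, hxk]
      nlinarith
    · have hxi : x i ≠ 0 := left_ne_zero_of_mul (hxy i hij).ne
      filter_upwards [Ioo_mem_nhdsGT (abs_pos.2 hxi)] with ε ⟨h0, h1⟩
      rw [abs_add_mul_of_mul_nonpos (hy i) (hxy i hij).le h1.le]
      simp [hij, hik, Equiv.swap_apply_of_ne_of_ne]
      nlinarith [hx1 i]

theorem exists_mem_illuminationDirections_of_nonneg (hB : IsSymBody n B)
    (hnorm : ∀ i, gauge B (Pi.single i (1 : ℝ)) = 1)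
    (hdist : gauge B (∑ i, Pi.single i (1 : ℝ)) < 2) {x : Fin n → ℝ} (hx : x ∈ B) {i : Fin n}
    (hi : (i : ℕ) < n - 1) (hxi : 0 ≤ x i) : ∃ y ∈ illuminationDirections n, Illuminates y x B := by
  obtain ⟨t, ht, htB⟩ := hB.exists_half_lt_const_mem hdist
  exact ⟨antisign x,
    Or.inl ⟨antisign_eq_one_or_eq_neg_one x, i, hi, by simp [antisign, hxi.not_gt]⟩,
    hB.illuminates_of_mul_nonpos ht htB hx (hB.abs_le_one hnorm hx)
      (antisign_eq_one_or_eq_neg_one x) (mul_antisign_nonpos x)⟩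

theorem exists_mem_illuminationDirections_of_neg (hB : IsSymBody n B)
    (hnorm : ∀ i, gauge B (Pi.single i (1 : ℝ)) = 1)
    (hcube : B ≠ Set.Icc (fun _ => (-1 : ℝ)) (fun _ => 1)) {i₀ j₀ : Fin n} (hij : i₀ ≠ j₀)
    (hflat : Pi.single i₀ (1 : ℝ) + Pi.single j₀ 1 ∈ B) {x : Fin n → ℝ} (hx : x ∈ B)
    (hneg : ∀ i : Fin n, (i : ℕ) < n - 1 → x i < 0) :
    ∃ y ∈ illuminationDirections n, Illuminates y x B := by
  have hx1 : ∀ i, |x i| ≤ 1 := hB.abs_le_one hnorm hx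
  let last : Fin n := ⟨n - 1, by have := i₀.isLt; omega⟩
  have hlast : ∀ i : Fin n, (i : ℕ) < n - 1 ↔ i ≠ last := fun i => by
    simp only [ne_eq, Fin.ext_iff, last]
    omega
  rcases (hx1 last).lt_or_eq with hxlast | hxlast
  · refine ⟨_, Or.inr rfl, hB.illuminates_of_abs_lt_one
      (hB.mem_iff_gauge_le_one.2 (hnorm last).le) hx hx1 hxlast ?_ ?_ ?_⟩
    · simp [Finset.sum_apply, Pi.single_apply, last]
    · intro i hi
      simp [Finset.sum_apply, Pi.single_apply, (hlast i).2 hi]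
    · intro i hi
      simpa [Finset.sum_apply, Pi.single_apply, (hlast i).2 hi] using hneg i ((hlast i).2 hi)
  by_cases hsmall : ∃ j : Fin n, (j : ℕ) < n - 1 ∧ |x j| < 1
  · obtain ⟨j, hj, hxj⟩ := hsmall
    have hy : ∀ i, Function.update (antisign x) j (-1) i = 1 ∨
        Function.update (antisign x) j (-1) i = -1 := fun i => by
      rcases eq_or_ne i j with rfl | hi
      · simp
      · simpa [hi] using antisign_eq_one_or_eq_neg_one x i
    refine ⟨_, Or.inl ⟨hy, j, hj, by simp⟩, hB.illuminates_of_abs_eq_one ((hlast j).1 hj)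
      (hB.single_add_single_mem hij hflat ((hlast j).1 hj)) hx hx1 hxlast hxj hy fun i hi => ?_⟩
    rw [Function.update_of_ne hi]
    refine mul_antisign_neg fun hxi => ?_
    by_cases hil : i = last
    · simp [← hil, hxi] at hxlast
    · exact (hneg i ((hlast i).2 hil)).ne hxi
  · push Not at hsmall
    refine absurd (hB.eq_Icc_of_abs_eq_one hnorm hx fun i => ?_) hcube
    by_cases hil : i = last
    · rw [hil, hxlast]
    · exact le_antisymm (hx1 i) (hsmall i ((hlast i).2 hil))

end IsSymBody

theorem statement_5_general (n : ℕ) (B : Set (Fin n → ℝ)) (hB : IsSymBody n B)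
    (hnorm : ∀ i, gauge B (Pi.single i (1 : ℝ)) = 1)
    (hdist : gauge B (∑ i, Pi.single i (1 : ℝ)) < 2)
    (hcube : B ≠ Set.Icc (fun _ => (-1 : ℝ)) (fun _ => 1)) :
    (∀ x ∈ frontier B, ∃ y : Fin n → ℝ,
        (((∀ i, y i = 1 ∨ y i = -1) ∧ ∃ i : Fin n, (i : ℕ) < n - 1 ∧ y i = -1) ∨
          y = ∑ i ∈ Finset.univ.filter (fun i : Fin n => (i : ℕ) < n - 1), Pi.single i (1 : ℝ)) ∧
        Illuminates y x B) ∨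
    (∀ i j : Fin n, i ≠ j →
        gauge B (Pi.single i (1 : ℝ)) < gauge B (Pi.single i (1 : ℝ) + Pi.single j (1 : ℝ))) := by
  refine or_iff_not_imp_right.2 fun hnot x hx => ?_
  push Not at hnot
  obtain ⟨i₀, j₀, hij, hflat⟩ := hnot
  rw [hnorm, ← hB.mem_iff_gauge_le_one] at hflat
  have hxB : x ∈ B := hB.isClosed.frontier_subset hx
  by_cases hpos : ∃ i : Fin n, (i : ℕ) < n - 1 ∧ 0 ≤ x i
  · obtain ⟨i, hi, hxi⟩ := hpos
    exact hB.exists_mem_illuminationDirections_of_nonneg hnorm hdist hxB hi hxi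
  · push Not at hpos
    exact hB.exists_mem_illuminationDirections_of_neg hnorm hcube hij hflat hxB hpos

theorem statement_5 (n : ℕ) (hn : 2 ≤ n) (B : Set (Fin n → ℝ)) (hB : IsSymBody n B)
    (hnorm : ∀ i, gauge B (Pi.single i (1 : ℝ)) = 1)
    (hdist : gauge B (∑ i, Pi.single i (1 : ℝ)) < 2)
    (hcube : B ≠ Set.Icc (fun _ => (-1 : ℝ)) (fun _ => 1)) :
    (∀ x ∈ frontier B, ∃ y : Fin n → ℝ,
        (((∀ i, y i = 1 ∨ y i = -1) ∧ ∃ i : Fin n, (i : ℕ) < n - 1 ∧ y i = -1) ∨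
          y = ∑ i ∈ Finset.univ.filter (fun i : Fin n => (i : ℕ) < n - 1), Pi.single i (1 : ℝ)) ∧
        Illuminates y x B) ∨
    (∀ i j : Fin n, i ≠ j →
        gauge B (Pi.single i (1 : ℝ)) < gauge B (Pi.single i (1 : ℝ) + Pi.single j (1 : ℝ))) :=
  statement_5_general n B hB hnorm hdist hcube
end

section
/- For natural numbers 1 ≤ k ≤ ⌈n/2⌉, the inequality C(n−k, k−1) / C(n, 2k−1) ≥ (4^k / (2n²)) · (1 − k/n)^{n−k} · (k/n)^k holds, where C denotes the binomial coefficient. -/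
/-!
Choosing a `(2k-1)`-set and then a `k`-subset of it is the same as choosing the `k`-set first,
so the ratio on the right equals `C(2k-1, k) / C(n, k)`. The numerator is half the central
binomial coefficient `C(2k, k) ≥ 4^k / (2k)`, and `2k ≤ n + 1` gives `4k ≤ 2n²`. The denominator
is bounded through the binomial theorem: with `p = k/n`, the term `C(n, k) p^k (1-p)^(n-k)` of
`(p + (1 - p))^n = 1` is at most `1`.
-/

theorem choose_mul_pow_mul_pow_le_add_pow {R : Type*} [CommSemiring R] [PartialOrder R]
    [IsOrderedRing R] {x y : R} (hx : 0 ≤ x) (hy : 0 ≤ y) {n k : ℕ} (hk : k ≤ n) :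
    n.choose k * x ^ k * y ^ (n - k) ≤ (x + y) ^ n := by
  rw [add_pow]
  calc n.choose k * x ^ k * y ^ (n - k) = x ^ k * y ^ (n - k) * n.choose k := by ring
    _ ≤ ∑ i ∈ Finset.range (n + 1), x ^ i * y ^ (n - i) * n.choose i :=
      Finset.single_le_sum (f := fun i => x ^ i * y ^ (n - i) * (n.choose i : R))
        (fun i _ => by positivity) (Finset.mem_range.mpr (Nat.lt_succ_of_le hk))

theorem Nat.centralBinom_succ_eq_two_mul_choose (m : ℕ) :
    (m + 1).centralBinom = 2 * (2 * m + 1).choose (m + 1) := by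
  rw [Nat.centralBinom_eq_two_mul_choose, show 2 * (m + 1) = 2 * m + 1 + 1 by ring,
    Nat.choose_succ_succ, ← Nat.choose_symm_half]
  ring

theorem Nat.four_pow_le_four_mul_self_mul_choose {k : ℕ} (hk : 0 < k) :
    4 ^ k ≤ 4 * k * (2 * k - 1).choose k := by
  obtain ⟨m, rfl⟩ := Nat.exists_eq_add_of_lt hk
  have h := Nat.four_pow_le_two_mul_self_mul_centralBinom (m + 1) m.succ_pos
  rw [Nat.centralBinom_succ_eq_two_mul_choose] at h
  rw [show 2 * (0 + m + 1) - 1 = 2 * m + 1 by omega, zero_add]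
  linarith

theorem Nat.choose_mul_choose_two_mul_sub_one (n k : ℕ) :
    n.choose (2 * k - 1) * (2 * k - 1).choose k = n.choose k * (n - k).choose (k - 1) := by
  rw [Nat.choose_mul (by omega), show 2 * k - 1 - k = k - 1 by omega]

theorem choose_mul_div_pow_mul_one_sub_div_pow_le_one {n k : ℕ} (hk : k ≤ n) :
    n.choose k * ((k : ℝ) / n) ^ k * (1 - (k : ℝ) / n) ^ (n - k) ≤ 1 := by
  have hkn : (k : ℝ) / n ≤ 1 := div_le_one_of_le₀ (by exact_mod_cast hk) (Nat.cast_nonneg n)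
  simpa using choose_mul_pow_mul_pow_le_add_pow (x := (k : ℝ) / n) (by positivity)
    (sub_nonneg.mpr hkn) hk

theorem statement_8 (n k : ℕ) (hn : 2 ≤ n) (hk : 1 ≤ k) (hk2 : k ≤ (n + 1) / 2) :
    (4 : ℝ) ^ k / (2 * (n : ℝ) ^ 2) * (1 - (k : ℝ) / n) ^ (n - k) * ((k : ℝ) / n) ^ k ≤
      ((n - k).choose (k - 1) : ℝ) / (n.choose (2 * k - 1) : ℝ) := by
  have hkn : k ≤ n := by omega
  have hCnk : (0 : ℝ) < n.choose k := by exact_mod_cast Nat.choose_pos hkn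
  have hCn2k : (0 : ℝ) < n.choose (2 * k - 1) := by exact_mod_cast Nat.choose_pos (by omega)
  have hratio : ((n - k).choose (k - 1) : ℝ) / n.choose (2 * k - 1) =
      (2 * k - 1).choose k / n.choose k := by
    rw [div_eq_div_iff hCn2k.ne' hCnk.ne']
    have h : ((n.choose (2 * k - 1) * (2 * k - 1).choose k : ℕ) : ℝ) =
        (n.choose k * (n - k).choose (k - 1) : ℕ) :=
      congrArg _ (n.choose_mul_choose_two_mul_sub_one k)
    push_cast at h
    linarith
  have hcentral : (4 : ℝ) ^ k / (2 * (n : ℝ) ^ 2) ≤ (2 * k - 1).choose k := by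
    have h4k : 4 * k ≤ 2 * n ^ 2 := by nlinarith [Nat.div_mul_le_self (n + 1) 2]
    have h : 4 ^ k ≤ 2 * n ^ 2 * (2 * k - 1).choose k :=
      (Nat.four_pow_le_four_mul_self_mul_choose hk).trans (Nat.mul_le_mul_right _ h4k)
    rw [div_le_iff₀ (by positivity)]
    exact_mod_cast h.trans_eq (mul_comm _ _)
  rw [hratio, le_div_iff₀ hCnk]
  calc (4 : ℝ) ^ k / (2 * (n : ℝ) ^ 2) * (1 - (k : ℝ) / n) ^ (n - k) * ((k : ℝ) / n) ^ k *
        n.choose k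
      = (4 : ℝ) ^ k / (2 * (n : ℝ) ^ 2) *
          (n.choose k * ((k : ℝ) / n) ^ k * (1 - (k : ℝ) / n) ^ (n - k)) := by ring
    _ ≤ (4 : ℝ) ^ k / (2 * (n : ℝ) ^ 2) * 1 := by
      gcongr
      exact choose_mul_div_pow_mul_one_sub_div_pow_le_one hkn
    _ ≤ (2 * k - 1).choose k := by rw [mul_one]; exact hcentral
end

section
/- There is a universal constant C such that for n ≥ C and any natural k ≤ ⌈n/2⌉ the following holds: with X¹, X², … i.i.d. uniform ±1 random vectors in ℝⁿ and P₁, P₂, … i.i.d. uniform random coordinate projections of rank 2k−1, all jointly independent, the event that for every y ∈ {−1,0,1}ⁿ with exactly k nonzero coordinates there exists ℓ ≤ 2ⁿ/n² with Pₗ(y) = y and Xᵢˡ = yᵢ for all i in the support of y, has probability at least 1 − exp(−2n). -/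
/-!
A trial `(b, S)` hits a vector `y` with support `T`, `#T = k`, and sign pattern `ε` exactly when
`T ⊆ S` and `b` agrees with `ε` on `T`. Of the `2ⁿ·C(n, 2k-1)` trials, `2^(n-k)·C(n-k, k-1)` do so;
since `C(n, 2k-1)·C(2k-1, k) = C(n, k)·C(n-k, k-1)`, `4^k ≤ 2(2k+1)·C(2k-1, k)` and
`2^(n-k)·C(n, k) ≤ 3ⁿ`, this is a fraction at least `(2/3)ⁿ / (2(n+2))`. Hence `L = ⌊2ⁿ/n²⌋`
independent trials all miss `y` with probability at most `exp(-4n)` as soon as `(4/3)ⁿ ≥ 32n⁴`,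
and a union bound over the at most `4ⁿ ≤ e^{2n}` pairs `(T, ε)` leaves `e^{-2n}`.
-/

open Finset Fintype Real

section UnionBound

variable {α ι : Type*} [DecidableEq α] {L : ℕ}

lemma card_filter_piFinset_not_forall_exists_mem_le (A : Finset α) (Y : Finset ι)
    (H : ι → Finset α) {h : ℕ} (hHA : ∀ y ∈ Y, H y ⊆ A) (hH : ∀ y ∈ Y, h ≤ #(H y)) :
    #((piFinset fun _ : Fin L => A).filter fun ω => ¬ ∀ y ∈ Y, ∃ ℓ, ω ℓ ∈ H y)
      ≤ #Y * (#A - h) ^ L := by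
  calc _ ≤ #(Y.biUnion fun y => piFinset fun _ : Fin L => A \ H y) := by
        refine card_le_card fun ω hω => ?_
        simp only [mem_filter, mem_piFinset, not_forall, not_exists] at hω
        obtain ⟨hωA, y, hy, hmiss⟩ := hω
        exact mem_biUnion.2 ⟨y, hy, mem_piFinset.2 fun ℓ => mem_sdiff.2 ⟨hωA ℓ, hmiss ℓ⟩⟩
    _ ≤ ∑ y ∈ Y, #(piFinset fun _ : Fin L => A \ H y) := card_biUnion_le
    _ ≤ ∑ _y ∈ Y, (#A - h) ^ L := sum_le_sum fun y hy => by
        rw [card_piFinset_const, card_sdiff_of_subset (hHA y hy)]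
        gcongr
        exact hH y hy
    _ = #Y * (#A - h) ^ L := by rw [sum_const, smul_eq_mul]

lemma Nat.cast_sub_le_mul_exp_neg_div {a : ℕ} (h : ℕ) (ha : 0 < a) :
    ((a - h : ℕ) : ℝ) ≤ a * exp (-(h / a)) := by
  rcases le_total h a with hha | hah
  · have ha' : (0 : ℝ) < a := by exact_mod_cast ha
    calc ((a - h : ℕ) : ℝ) = a * (1 - h / a) := by rw [Nat.cast_sub hha]; field_simp
      _ ≤ a * exp (-(h / a)) := by gcongr; exact one_sub_le_exp_neg _
  · rw [Nat.sub_eq_zero_of_le hah, Nat.cast_zero]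
    positivity

theorem one_sub_card_mul_exp_le_card_filter_piFinset_div (A : Finset α) (hA : A.Nonempty)
    (Y : Finset ι) (H : ι → Finset α) {h : ℕ} (hHA : ∀ y ∈ Y, H y ⊆ A)
    (hH : ∀ y ∈ Y, h ≤ #(H y)) :
    1 - #Y * exp (-(h * L / #A)) ≤
      (#((piFinset fun _ : Fin L => A).filter fun ω => ∀ y ∈ Y, ∃ ℓ, ω ℓ ∈ H y) : ℝ) /
        #(piFinset fun _ : Fin L => A) := by
  set Ω := piFinset fun _ : Fin L => A
  have hA' : (0 : ℝ) < #A := by exact_mod_cast hA.card_pos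
  have hΩ : (#Ω : ℝ) = #A ^ L := by simp [Ω]
  have hsplit : (#(Ω.filter fun ω => ∀ y ∈ Y, ∃ ℓ, ω ℓ ∈ H y) : ℝ) =
      #Ω - #(Ω.filter fun ω => ¬ ∀ y ∈ Y, ∃ ℓ, ω ℓ ∈ H y) := by
    rw [eq_sub_iff_add_eq]; exact_mod_cast card_filter_add_card_filter_not _
  have hbad : (#(Ω.filter fun ω => ¬ ∀ y ∈ Y, ∃ ℓ, ω ℓ ∈ H y) : ℝ) ≤
      #Y * exp (-(h * L / #A)) * #Ω :=
    calc (#(Ω.filter fun ω => ¬ ∀ y ∈ Y, ∃ ℓ, ω ℓ ∈ H y) : ℝ)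
        ≤ #Y * ((#A - h : ℕ) : ℝ) ^ L := by
          exact_mod_cast card_filter_piFinset_not_forall_exists_mem_le A Y H hHA hH
      _ ≤ #Y * (#A * exp (-(h / #A))) ^ L := by
          gcongr; exact Nat.cast_sub_le_mul_exp_neg_div h hA.card_pos
      _ = #Y * exp (-(h * L / #A)) * #Ω := by
          rw [hΩ, mul_pow, ← exp_nat_mul]; ring_nf
  rw [le_div_iff₀ (by rw [hΩ]; positivity), hsplit]
  linarith

end UnionBound

lemma card_filter_forall_mem_apply_eq {ι β : Type*} [Fintype ι] [DecidableEq ι] [Fintype β]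
    [DecidableEq β] (T : Finset ι) (ε : ι → β) :
    #(univ.filter fun b : ι → β => ∀ i ∈ T, b i = ε i) = card β ^ #Tᶜ := by
  have : univ.filter (fun b : ι → β => ∀ i ∈ T, b i = ε i) =
      piFinset fun i => if i ∈ T then {ε i} else univ := by
    ext b; simp only [mem_filter, mem_univ, true_and, mem_piFinset]
    refine forall_congr' fun i => ?_
    split_ifs with hi <;> simp [hi]
  rw [this, card_piFinset, prod_apply_ite]
  simp [filter_not, compl_eq_univ_sdiff]

section Trials

abbrev Trial (n : ℕ) := (Fin n → Bool) × Finset (Fin n)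

def trials (n m : ℕ) : Finset (Trial n) := univ ×ˢ powersetCard m univ

def hits {n : ℕ} (m : ℕ) (T : Finset (Fin n)) (ε : Fin n → Bool) : Finset (Trial n) :=
  (univ.filter fun b => ∀ i ∈ T, b i = ε i) ×ˢ (powersetCard m univ).filter (T ⊆ ·)

variable {n m : ℕ}

lemma card_trials : #(trials n m) = 2 ^ n * n.choose m := by
  simp [trials]

lemma hits_subset_trials (T : Finset (Fin n)) (ε : Fin n → Bool) : hits m T ε ⊆ trials n m :=
  product_subset_product (subset_univ _) (filter_subset _ _)

lemma card_hits {T : Finset (Fin n)} (hT : #T ≤ m) (ε : Fin n → Bool) :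
    #(hits m T ε) = 2 ^ (n - #T) * (n - #T).choose (m - #T) := by
  have hsigns : #(univ.filter fun b : Fin n → Bool => ∀ i ∈ T, b i = ε i) = 2 ^ (n - #T) := by
    -- `convert` bridges the two `Decidable` instances of `∀ i ∈ T` on `Fin n`
    convert card_filter_forall_mem_apply_eq T ε
    · exact Fintype.card_bool.symm
    · rw [card_compl, Fintype.card_fin]
  rw [hits, card_product, hsigns, card_filter_powersetCard_subset _ _ _ (subset_univ T) hT,
    card_univ, Fintype.card_fin]

lemma trials_nonempty (hm : m ≤ n) : (trials n m).Nonempty :=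
  card_pos.1 (by rw [card_trials]; exact Nat.mul_pos (by positivity) (Nat.choose_pos hm))

end Trials

lemma Nat.two_pow_mul_choose_le_three_pow (n k : ℕ) : 2 ^ k * n.choose k ≤ 3 ^ n := by
  rcases le_or_gt k n with hk | hk
  · calc 2 ^ k * n.choose k = 2 ^ k * 1 ^ (n - k) * n.choose k := by rw [one_pow, mul_one]
      _ ≤ ∑ i ∈ range (n + 1), 2 ^ i * 1 ^ (n - i) * n.choose i :=
        single_le_sum (f := fun i => 2 ^ i * 1 ^ (n - i) * n.choose i)
          (fun _ _ => Nat.zero_le _) (mem_range.2 (Nat.lt_succ_of_le hk))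
      _ = 3 ^ n := (add_pow 2 1 n).symm
  · simp [Nat.choose_eq_zero_of_lt hk]

lemma Nat.four_pow_le_mul_choose_odd (j : ℕ) :
    4 ^ (j + 1) ≤ 2 * (2 * j + 3) * (2 * j + 1).choose j := by
  have hcentral : (2 * (j + 1)).choose (j + 1) = 2 * (2 * j + 1).choose j := by
    rw [show 2 * (j + 1) = 2 * j + 1 + 1 by ring, Nat.choose_succ_succ', Nat.choose_symm_half]
    ring
  calc 4 ^ (j + 1) ≤ (2 * (j + 1) + 1) * (2 * (j + 1)).choose (j + 1) :=
        Nat.four_pow_le_two_mul_add_one_mul_central_binom _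
    _ = 2 * (2 * j + 3) * (2 * j + 1).choose j := by rw [hcentral]; ring

lemma Nat.two_pow_mul_choose_odd_le {n j : ℕ} (hj : 2 * j + 1 ≤ n) :
    2 ^ n * (2 ^ n * n.choose (2 * j + 1)) ≤
      2 * (2 * j + 3) * 3 ^ n * (2 ^ (n - (j + 1)) * (n - (j + 1)).choose j) := by
  have hmul : n.choose (2 * j + 1) * (2 * j + 1).choose j =
      n.choose (j + 1) * (n - (j + 1)).choose j := by
    have := Nat.choose_mul (n := n) (k := 2 * j + 1) (s := j + 1) (by omega)
    rwa [Nat.choose_symm_half, show 2 * j + 1 - (j + 1) = j by omega] at this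
  have hpow : 2 ^ n = 2 ^ (j + 1) * 2 ^ (n - (j + 1)) := by rw [← pow_add]; congr 1; omega
  have hthree : 2 ^ (n - (j + 1)) * n.choose (j + 1) ≤ 3 ^ n := by
    simpa [Nat.choose_symm (by omega : j + 1 ≤ n)] using
      Nat.two_pow_mul_choose_le_three_pow n (n - (j + 1))
  refine Nat.le_of_mul_le_mul_right ?_ (Nat.choose_pos (by omega) : 0 < (2 * j + 1).choose j)
  calc 2 ^ n * (2 ^ n * n.choose (2 * j + 1)) * (2 * j + 1).choose j
      = 4 ^ (j + 1) * (2 ^ (n - (j + 1)) * n.choose (j + 1)) *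
          (2 ^ (n - (j + 1)) * (n - (j + 1)).choose j) := by
        rw [mul_assoc, mul_assoc, hmul, hpow, show (4 : ℕ) = 2 ^ 2 by rfl, ← pow_mul]; ring
    _ ≤ 2 * (2 * j + 3) * (2 * j + 1).choose j * 3 ^ n *
          (2 ^ (n - (j + 1)) * (n - (j + 1)).choose j) := by
        gcongr
        exact Nat.four_pow_le_mul_choose_odd j
    _ = _ := by ring

lemma Nat.mul_pow_four_mul_three_pow_le_four_pow {n : ℕ} (hn : 100 ≤ n) :
    32 * n ^ 4 * 3 ^ n ≤ 4 ^ n := by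
  induction n, hn using Nat.le_induction with
  | base => norm_num
  | succ n hn ih =>
    have : 3 * (n + 1) ^ 4 ≤ 4 * n ^ 4 := by
      have h1 : 100 * n ^ 3 ≤ n ^ 4 := by
        calc 100 * n ^ 3 ≤ n * n ^ 3 := by gcongr
          _ = n ^ 4 := by ring
      nlinarith [pow_pos (show 0 < n by omega) 2]
    calc 32 * (n + 1) ^ 4 * 3 ^ (n + 1) = 32 * (3 * (n + 1) ^ 4) * 3 ^ n := by ring
      _ ≤ 32 * (4 * n ^ 4) * 3 ^ n := by gcongr
      _ = 4 * (32 * n ^ 4 * 3 ^ n) := by ring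
      _ ≤ 4 * 4 ^ n := by gcongr
      _ = 4 ^ (n + 1) := by ring

lemma Nat.le_two_mul_mul_div {a b : ℕ} (hb : 0 < b) (hba : b ≤ a) : a ≤ 2 * b * (a / b) := by
  have h1 : 1 ≤ a / b := (Nat.one_le_div_iff hb).2 hba
  have h2 := Nat.lt_mul_div_succ a hb
  nlinarith

lemma Nat.mul_mul_three_pow_le_two_pow_mul_div {n : ℕ} (hn : 100 ≤ n) :
    8 * n * (n + 2) * 3 ^ n ≤ 2 ^ n * (2 ^ n / n ^ 2) := by
  have hgrowth := Nat.mul_pow_four_mul_three_pow_le_four_pow hn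
  have hsq : n ^ 2 ≤ 2 ^ n := by
    refine (Nat.pow_le_pow_iff_left two_ne_zero).1 ?_
    calc (n ^ 2) ^ 2 = 1 * n ^ 4 * 1 := by ring
      _ ≤ 32 * n ^ 4 * 3 ^ n := by gcongr; exacts [by norm_num, Nat.one_le_pow _ _ three_pos]
      _ ≤ 4 ^ n := hgrowth
      _ = (2 ^ n) ^ 2 := by rw [← pow_mul, mul_comm, pow_mul]; norm_num
  refine Nat.le_of_mul_le_mul_right ?_ (show 0 < 2 * n ^ 2 by positivity)
  calc 8 * n * (n + 2) * 3 ^ n * (2 * n ^ 2) = 16 * n ^ 3 * (n + 2) * 3 ^ n := by ring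
    _ ≤ 16 * n ^ 3 * (2 * n) * 3 ^ n := by gcongr; omega
    _ = 32 * n ^ 4 * 3 ^ n := by ring
    _ ≤ 4 ^ n := hgrowth
    _ = 2 ^ n * 2 ^ n := by rw [← mul_pow]; norm_num
    _ ≤ 2 ^ n * (2 * n ^ 2 * (2 ^ n / n ^ 2)) := by
        gcongr; exact Nat.le_two_mul_mul_div (by positivity) hsq
    _ = 2 ^ n * (2 ^ n / n ^ 2) * (2 * n ^ 2) := by ring

lemma four_mul_card_trials_le_two_pow_mul_choose_mul_div {n j : ℕ} (hn : 100 ≤ n) (hj : 2 * j + 1 ≤ n) :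
    4 * n * #(trials n (2 * j + 1)) ≤
      2 ^ (n - (j + 1)) * (n - (j + 1)).choose j * (2 ^ n / n ^ 2) := by
  rw [card_trials]
  refine Nat.le_of_mul_le_mul_left ?_ (show 0 < 2 ^ n by positivity)
  calc 2 ^ n * (4 * n * (2 ^ n * n.choose (2 * j + 1)))
      = 4 * n * (2 ^ n * (2 ^ n * n.choose (2 * j + 1))) := by ring
    _ ≤ 4 * n * (2 * (2 * j + 3) * 3 ^ n * (2 ^ (n - (j + 1)) * (n - (j + 1)).choose j)) := by
        gcongr 4 * n * ?_; exact Nat.two_pow_mul_choose_odd_le hj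
    _ ≤ 4 * n * (2 * (n + 2) * 3 ^ n * (2 ^ (n - (j + 1)) * (n - (j + 1)).choose j)) := by
        gcongr 4 * n * (2 * ?_ * _ * _); omega
    _ = 8 * n * (n + 2) * 3 ^ n * (2 ^ (n - (j + 1)) * (n - (j + 1)).choose j) := by ring
    _ ≤ 2 ^ n * (2 ^ n / n ^ 2) * (2 ^ (n - (j + 1)) * (n - (j + 1)).choose j) := by
        gcongr ?_ * _; exact Nat.mul_mul_three_pow_le_two_pow_mul_div hn
    _ = _ := by ring

open scoped Classical in
lemma exists_hit_of_forall_exists_mem_hits {n m k L : ℕ} {ω : Fin L → Trial n}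
    (hω : ∀ y ∈ powersetCard k univ ×ˢ univ, ∃ ℓ, ω ℓ ∈ hits m y.1 y.2)
    {y : Fin n → ℝ} (hy : ∀ i, y i = -1 ∨ y i = 0 ∨ y i = 1)
    (hk : #(univ.filter fun i => y i ≠ 0) = k) :
    ∃ ℓ, (∀ i, y i ≠ 0 → i ∈ (ω ℓ).2) ∧
      ∀ i, y i ≠ 0 → (if (ω ℓ).1 i then (1 : ℝ) else -1) = y i := by
  obtain ⟨ℓ, hℓ⟩ := hω (univ.filter fun i => y i ≠ 0, fun i => decide (y i = 1))
    (by simp [mem_product, mem_powersetCard, hk])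
  simp only [hits, mem_product, mem_filter, mem_univ, true_and] at hℓ
  obtain ⟨hsign, -, hsupp⟩ := hℓ
  refine ⟨ℓ, fun i hi => hsupp (by simpa using hi), fun i hi => ?_⟩
  rw [hsign i (by simpa using hi)]
  rcases hy i with h | h | h <;> simp_all

lemma card_powersetCard_univ_product_univ_le_exp (n k : ℕ) :
    (#(powersetCard k (univ : Finset (Fin n)) ×ˢ (univ : Finset (Fin n → Bool))) : ℝ) ≤
      exp (2 * n) := by
  have hcard : #(powersetCard k (univ : Finset (Fin n)) ×ˢ (univ : Finset (Fin n → Bool))) ≤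
      4 ^ n := by
    simp only [card_product, card_powersetCard, card_univ, Fintype.card_fin, Fintype.card_fun,
      Fintype.card_bool]
    calc n.choose k * 2 ^ n ≤ 2 ^ n * 2 ^ n := by gcongr; exact Nat.choose_le_two_pow n k
      _ = 4 ^ n := by rw [← mul_pow]; norm_num
  have h4 : (4 : ℝ) ≤ exp 2 := by nlinarith [quadratic_le_exp_of_nonneg (zero_le_two : (0 : ℝ) ≤ 2)]
  calc (#(powersetCard k (univ : Finset (Fin n)) ×ˢ (univ : Finset (Fin n → Bool))) : ℝ)
      ≤ 4 ^ n := by exact_mod_cast hcard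
    _ ≤ exp 2 ^ n := by gcongr
    _ = exp (2 * n) := by rw [← exp_nat_mul, mul_comm]

open scoped Classical in
/-- `(ω ℓ).1` is the `ℓ`-th sign vector (`true ↦ 1`, `false ↦ -1`) and `(ω ℓ).2` the index set
of the `ℓ`-th coordinate projection; probabilities are proportions of `Ω`. -/
theorem statement_11 :
    ∃ C : ℕ, ∀ n k : ℕ, C ≤ n → 1 ≤ k → k ≤ (n + 1) / 2 →
      let L := 2 ^ n / n ^ 2
      let Ω := Finset.univ.filter
        (fun ω : Fin L → (Fin n → Bool) × Finset (Fin n) => ∀ ℓ, (ω ℓ).2.card = 2 * k - 1)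
      let E := Ω.filter (fun ω => ∀ y : Fin n → ℝ,
        (∀ i, y i = -1 ∨ y i = 0 ∨ y i = 1) →
        (Finset.univ.filter fun i => y i ≠ 0).card = k →
        ∃ ℓ, (∀ i, y i ≠ 0 → i ∈ (ω ℓ).2) ∧
          ∀ i, y i ≠ 0 → (if (ω ℓ).1 i then (1 : ℝ) else -1) = y i)
      1 - Real.exp (-2 * n) ≤ (E.card : ℝ) / (Ω.card : ℝ) := by
  refine ⟨100, fun n k hn hk hkn => ?_⟩
  obtain ⟨j, rfl⟩ : ∃ j, k = j + 1 := ⟨k - 1, by omega⟩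
  have hj : 2 * j + 1 ≤ n := by omega
  intro L Ω E
  set A := trials n (2 * j + 1)
  set Y := powersetCard (j + 1) (univ : Finset (Fin n)) ×ˢ (univ : Finset (Fin n → Bool))
  set h := 2 ^ (n - (j + 1)) * (n - (j + 1)).choose j
  have hA : A.Nonempty := trials_nonempty hj
  have hΩ : Ω = piFinset fun _ : Fin L => A := by
    ext ω
    simp [Ω, A, trials, mem_piFinset, show 2 * (j + 1) - 1 = 2 * j + 1 by omega]
  have hhits : ∀ y ∈ Y, h ≤ #(hits (2 * j + 1) y.1 y.2) := fun y hy => by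
    rw [mem_product, mem_powersetCard] at hy
    rw [card_hits (by omega), hy.1.2]
    simp [h, show 2 * j + 1 - (j + 1) = j by omega]
  have hY : (#Y : ℝ) ≤ exp (2 * n) := card_powersetCard_univ_product_univ_le_exp n (j + 1)
  have hrate : (4 * n : ℝ) ≤ h * L / #A := by
    rw [le_div_iff₀ (by exact_mod_cast hA.card_pos)]
    exact_mod_cast four_mul_card_trials_le_two_pow_mul_choose_mul_div hn hj
  calc 1 - exp (-2 * n) ≤ 1 - #Y * exp (-(h * L / #A)) := by
        have : #Y * exp (-(h * L / #A)) ≤ exp (2 * n) * exp (-(4 * n)) := by gcongr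
        rw [← exp_add, show 2 * (n : ℝ) + -(4 * n) = -2 * n by ring] at this
        linarith
    _ ≤ _ := one_sub_card_mul_exp_le_card_filter_piFinset_div A hA Y
          (fun y => hits (2 * j + 1) y.1 y.2) (fun _ _ => hits_subset_trials _ _) hhits
    _ ≤ #E / #Ω := by
        rw [hΩ]
        gcongr
        intro ω hω
        simp only [mem_filter] at hω
        exact mem_filter.2
          ⟨hΩ ▸ hω.1, fun y hy hk => exists_hit_of_forall_exists_mem_hits hω.2 hy hk⟩
end
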